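/- For every graph G of order n with maximum degree Δ ≥ 2, γ(G) ≤ (1 + ln(1+Δ)) · γ_f(G); in particular γ(G) ≤ C·ln(n)·γ_f(G) for an absolute constant C. -/

import Mathlib

open Finset

namespace SG

variable {V : Type*}

/-- Closed neighborhood of a vertex as a `Finset`. -/
def closedNbhd [Fintype V] [DecidableEq V] (G : SimpleGraph V) [DecidableRel G.Adj]
    (v : V) : Finset V :=
  insert v (G.neighborFinset v)

/-- A fractional domination: weights in `[0,1]` with each closed neighborhood of weight `≥ 1`. -/
def IsFracDom [Fintype V] [DecidableEq V] (G : SimpleGraph V) [DecidableRel G.Adj]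
    (f : V → ℝ) : Prop :=
  (∀ v, 0 ≤ f v ∧ f v ≤ 1) ∧ ∀ v, 1 ≤ ∑ u ∈ closedNbhd G v, f u

/-- The fractional domination number. -/
noncomputable def fracDomNumber [Fintype V] [DecidableEq V] (G : SimpleGraph V)
    [DecidableRel G.Adj] : ℝ :=
  sInf {x | ∃ f, IsFracDom G f ∧ x = ∑ v, f v}

/-- A dominating set: every vertex not in `S` is adjacent to some vertex of `S`. -/
def IsDomSet (G : SimpleGraph V) (S : Finset V) : Prop :=
  ∀ v, v ∉ S → ∃ u ∈ S, G.Adj u v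

/-- The domination number. -/
noncomputable def domNumber [Fintype V] (G : SimpleGraph V) : ℕ :=
  sInf {k | ∃ S : Finset V, S.card = k ∧ IsDomSet G S}

/-!
The greedy algorithm repeatedly picks a vertex whose closed neighbourhood covers the most
still-uncovered vertices. Given a fractional dominating function `f`, consider the potential
`Φ(U) = ∑ᵤ f(u) · H(|N[u] ∩ U|)` of the uncovered set `U`, with `H` the harmonic numbers.
If the chosen neighbourhood covers `c` new vertices, each of these has `f`-weight at least `1` on
its closed neighbourhood and every `|N[u] ∩ U|` is at most `c`, so `Φ` drops by at least `1`.
Hence the greedy dominating set has at most `Φ(V) ≤ H(Δ + 1) · ∑ f` vertices, and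
`H(Δ + 1) ≤ 1 + ln(1 + Δ)`.
-/

theorem harmonic_mono : Monotone harmonic :=
  monotone_nat_of_le_succ fun n => by
    rw [harmonic_succ]
    exact le_add_of_nonneg_right (by positivity)

theorem harmonic_nonneg (n : ℕ) : 0 ≤ harmonic n :=
  harmonic_zero ▸ harmonic_mono n.zero_le

theorem div_le_harmonic_add_sub_harmonic {b d c : ℕ} (h : b + d ≤ c) :
    (d : ℚ) / c ≤ harmonic (b + d) - harmonic b := by
  rw [harmonic, harmonic, sum_range_add, add_sub_cancel_left]
  calc (d : ℚ) / c = ∑ _i ∈ range d, (c : ℚ)⁻¹ := by simp [div_eq_mul_inv]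
    _ ≤ ∑ i ∈ range d, ((b + i + 1 : ℕ) : ℚ)⁻¹ := sum_le_sum fun i hi => by
      have := mem_range.1 hi
      exact inv_anti₀ (by positivity) (by exact_mod_cast (show b + i + 1 ≤ c by omega))

theorem one_add_log_le_two_mul_log {x y : ℝ} (hx : 3 ≤ x) (hxy : x ≤ y) :
    1 + Real.log x ≤ 2 * Real.log y := by
  have hy : 1 ≤ Real.log y := by
    rw [Real.le_log_iff_exp_le (by linarith)]
    linarith [Real.exp_one_lt_three]
  linarith [Real.log_le_log (by linarith) hxy]

section Graph

variable [Fintype V] [DecidableEq V] (G : SimpleGraph V) [DecidableRel G.Adj]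

theorem mem_closedNbhd_comm {u v : V} : v ∈ closedNbhd G u ↔ u ∈ closedNbhd G v := by
  simp only [closedNbhd, mem_insert, SimpleGraph.mem_neighborFinset, G.adj_comm, eq_comm]

theorem card_closedNbhd (u : V) : #(closedNbhd G u) = G.degree u + 1 := by
  rw [closedNbhd, card_insert_of_notMem (G.notMem_neighborFinset_self u),
    SimpleGraph.card_neighborFinset_eq_degree]

theorem isFracDom_one : IsFracDom G 1 := by
  refine ⟨fun _ => ⟨zero_le_one, le_rfl⟩, fun v => ?_⟩
  simp only [Pi.one_apply, sum_const, nsmul_eq_mul, mul_one, Nat.one_le_cast]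
  exact card_pos.2 ⟨v, mem_insert_self _ _⟩

theorem fracDomNumber_nonneg : 0 ≤ fracDomNumber G :=
  le_csInf ⟨_, 1, isFracDom_one G, rfl⟩ fun _ ⟨_, hf, hx⟩ =>
    hx ▸ sum_nonneg fun v _ => (hf.1 v).1

theorem card_le_sum_mul_card_closedNbhd_inter {f : V → ℝ}
    (hf : ∀ v, 1 ≤ ∑ u ∈ closedNbhd G v, f u) (M : Finset V) :
    (#M : ℝ) ≤ ∑ u, f u * #(closedNbhd G u ∩ M) := by
  calc (#M : ℝ) = ∑ _v ∈ M, (1 : ℝ) := by simp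
    _ ≤ ∑ v ∈ M, ∑ u ∈ closedNbhd G v, f u := sum_le_sum fun v _ => hf v
    _ = ∑ v ∈ M, ∑ u, if v ∈ closedNbhd G u then f u else 0 := by
        refine sum_congr rfl fun v _ => ?_
        simp_rw [mem_closedNbhd_comm G (v := v), sum_ite_mem, univ_inter]
    _ = ∑ u, f u * #(closedNbhd G u ∩ M) := by
        rw [sum_comm]
        refine sum_congr rfl fun u _ => ?_
        rw [inter_comm, ← filter_mem_eq_inter, card_filter, Nat.cast_sum, mul_sum]
        refine sum_congr rfl fun v _ => ?_
        split_ifs <;> simp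

noncomputable def coverPotential (f : V → ℝ) (U : Finset V) : ℝ :=
  ∑ u, f u * harmonic #(closedNbhd G u ∩ U)

theorem coverPotential_nonneg {f : V → ℝ} (hf : ∀ v, 0 ≤ f v) (U : Finset V) :
    0 ≤ coverPotential G f U :=
  sum_nonneg fun u _ => mul_nonneg (hf u) (Rat.cast_nonneg.2 (harmonic_nonneg _))

theorem one_add_coverPotential_sdiff_le {f : V → ℝ} (hf : IsFracDom G f) {U : Finset V}
    {u₀ : V} (hmax : ∀ u, #(closedNbhd G u ∩ U) ≤ #(closedNbhd G u₀ ∩ U))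
    (hne : (closedNbhd G u₀ ∩ U).Nonempty) :
    1 + coverPotential G f (U \ closedNbhd G u₀) ≤ coverPotential G f U := by
  set M := closedNbhd G u₀ ∩ U
  have hM : (0 : ℝ) < #M := by exact_mod_cast hne.card_pos
  have hdrop : ∀ u, (#(closedNbhd G u ∩ M) : ℝ) / #M ≤
      harmonic #(closedNbhd G u ∩ U) - harmonic #(closedNbhd G u ∩ (U \ closedNbhd G u₀)) := by
    intro u
    have hsplit : #(closedNbhd G u ∩ U) =
        #(closedNbhd G u ∩ (U \ closedNbhd G u₀)) + #(closedNbhd G u ∩ M) := by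
      rw [← card_sdiff_add_card_inter (closedNbhd G u ∩ U) (closedNbhd G u₀), inter_sdiff_assoc,
        inter_assoc, inter_comm U]
    have := div_le_harmonic_add_sub_harmonic (hsplit ▸ hmax u)
    rw [← hsplit] at this
    have hℝ := (Rat.cast_le (K := ℝ)).2 this
    push_cast at hℝ
    exact hℝ
  calc 1 + coverPotential G f (U \ closedNbhd G u₀)
      ≤ (∑ u, f u * #(closedNbhd G u ∩ M)) / #M + coverPotential G f (U \ closedNbhd G u₀) := by
        gcongr
        rw [one_le_div hM]
        exact card_le_sum_mul_card_closedNbhd_inter G hf.2 M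
    _ ≤ coverPotential G f U := by
        rw [← le_sub_iff_add_le, coverPotential, coverPotential, ← sum_sub_distrib, sum_div]
        exact sum_le_sum fun u _ => by
          rw [mul_div_assoc, ← mul_sub]
          exact mul_le_mul_of_nonneg_left (hdrop u) (hf.1 u).1

theorem exists_cover_card_le_coverPotential {f : V → ℝ} (hf : IsFracDom G f) (U : Finset V) :
    ∃ S : Finset V, (∀ v ∈ U, ∃ u ∈ S, v ∈ closedNbhd G u) ∧
      (#S : ℝ) ≤ coverPotential G f U := by
  induction U using strongInduction with
  | _ U ih =>
  rcases U.eq_empty_or_nonempty with rfl | ⟨v, hv⟩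
  · exact ⟨∅, by simp, by simpa using coverPotential_nonneg G (fun v => (hf.1 v).1) ∅⟩
  obtain ⟨u₀, -, hmax⟩ := exists_max_image univ (fun u => #(closedNbhd G u ∩ U)) ⟨v, mem_univ v⟩
  have hne : (closedNbhd G u₀ ∩ U).Nonempty :=
    card_pos.1 <| (card_pos.2 ⟨v, mem_inter.2 ⟨mem_insert_self v _, hv⟩⟩).trans_le
      (hmax v (mem_univ v))
  obtain ⟨w, hw⟩ := hne
  have hsub : U \ closedNbhd G u₀ ⊂ U :=
    (ssubset_iff_of_subset sdiff_subset).2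
      ⟨w, (mem_inter.1 hw).2, fun h => (mem_sdiff.1 h).2 (mem_inter.1 hw).1⟩
  obtain ⟨S, hcov, hcard⟩ := ih _ hsub
  refine ⟨insert u₀ S, fun x hx => ?_, ?_⟩
  · by_cases hx₀ : x ∈ closedNbhd G u₀
    · exact ⟨u₀, mem_insert_self _ _, hx₀⟩
    · obtain ⟨u, hu, hxu⟩ := hcov x (mem_sdiff.2 ⟨hx, hx₀⟩)
      exact ⟨u, mem_insert_of_mem hu, hxu⟩
  · calc (#(insert u₀ S) : ℝ) ≤ 1 + #S := by rw [add_comm]; exact_mod_cast card_insert_le u₀ S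
      _ ≤ 1 + coverPotential G f (U \ closedNbhd G u₀) := by gcongr
      _ ≤ coverPotential G f U :=
        one_add_coverPotential_sdiff_le G hf (fun u => hmax u (mem_univ u)) ⟨w, hw⟩

theorem isDomSet_of_forall_mem_closedNbhd {S : Finset V}
    (hS : ∀ v, ∃ u ∈ S, v ∈ closedNbhd G u) : IsDomSet G S := fun v hv => by
  obtain ⟨u, hu, hvu⟩ := hS v
  rcases mem_insert.1 hvu with rfl | hadj
  · exact absurd hu hv
  · exact ⟨u, hu, (G.mem_neighborFinset u v).1 hadj⟩

theorem domNumber_le_harmonic_mul_sum {f : V → ℝ} (hf : IsFracDom G f) :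
    (domNumber G : ℝ) ≤ harmonic (G.maxDegree + 1) * ∑ v, f v := by
  obtain ⟨S, hcov, hcard⟩ := exists_cover_card_le_coverPotential G hf univ
  have hdom := isDomSet_of_forall_mem_closedNbhd G fun v => hcov v (mem_univ v)
  have hγ : domNumber G ≤ #S := Nat.sInf_le ⟨S, rfl, hdom⟩
  calc (domNumber G : ℝ) ≤ #S := by exact_mod_cast hγ
    _ ≤ coverPotential G f univ := hcard
    _ ≤ ∑ u, f u * harmonic (G.maxDegree + 1) := sum_le_sum fun u _ => by
        refine mul_le_mul_of_nonneg_left (Rat.cast_le.2 (harmonic_mono ?_)) (hf.1 u).1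
        rw [inter_univ, card_closedNbhd]
        exact Nat.add_le_add_right (G.degree_le_maxDegree u) 1
    _ = harmonic (G.maxDegree + 1) * ∑ v, f v := by rw [← sum_mul, mul_comm]

theorem domNumber_le_harmonic_mul_fracDomNumber :
    (domNumber G : ℝ) ≤ harmonic (G.maxDegree + 1) * fracDomNumber G := by
  have hH : (0 : ℝ) < harmonic (G.maxDegree + 1) := by
    exact_mod_cast harmonic_pos (Nat.succ_ne_zero _)
  rw [← div_le_iff₀' hH]
  exact le_csInf ⟨_, 1, isFracDom_one G, rfl⟩ fun _ ⟨f, hf, hx⟩ =>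
    hx ▸ (div_le_iff₀' hH).2 (domNumber_le_harmonic_mul_sum G hf)

end Graph

/-- for every graph of order `n` with `Δ ≥ 2`,
`γ(G) ≤ (1 + ln(1+Δ))·γ_f(G)`, and in particular `γ(G) ≤ C·ln(n)·γ_f(G)` for
an absolute constant `C`. -/
theorem dom_le_log_fracDom :
    ∃ C : ℝ, 0 < C ∧
      ∀ (V : Type) [Fintype V] [DecidableEq V] (G : SimpleGraph V),
        ∀ (_ : DecidableRel G.Adj), 2 ≤ G.maxDegree →
          (domNumber G : ℝ) ≤ (1 + Real.log (1 + (G.maxDegree : ℝ))) * fracDomNumber G ∧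
          (domNumber G : ℝ) ≤ C * Real.log (Fintype.card V : ℝ) * fracDomNumber G := by
  refine ⟨2, two_pos, fun V _ _ G _ hΔ => ?_⟩
  have hharmonic : (harmonic (G.maxDegree + 1) : ℝ) ≤ 1 + Real.log (1 + G.maxDegree) := by
    simpa [add_comm] using harmonic_le_one_add_log (G.maxDegree + 1)
  have hfirst := (domNumber_le_harmonic_mul_fracDomNumber G).trans
    (mul_le_mul_of_nonneg_right hharmonic (fracDomNumber_nonneg G))
  refine ⟨hfirst, hfirst.trans (mul_le_mul_of_nonneg_right ?_ (fracDomNumber_nonneg G))⟩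
  have : Nonempty V := by
    by_contra hV
    have := G.maxDegree_le_of_forall_degree_le 0 fun v => (hV (Nonempty.intro v)).elim
    omega
  have hn : (1 + G.maxDegree : ℝ) ≤ Fintype.card V := by
    exact_mod_cast (add_comm 1 _).trans_le G.maxDegree_lt_card_verts
  have hΔ' : (3 : ℝ) ≤ 1 + G.maxDegree := by
    have : (2 : ℝ) ≤ G.maxDegree := by exact_mod_cast hΔ
    linarith
  exact one_add_log_le_two_mul_log hΔ' hn

end SG
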